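/- arXiv:2002.08818 — 2 statements merged into one kernel-verified Lean document; each statement's English description precedes it below -/
import Mathlib

section
/- Let d ≥ 1, R > 0, kε > 0, σ > 0, p_atm ∈ ℝ. On ℝᵈ \ {0} define the interface field b(x) = −(x / (√π · kε · R · ‖x‖)) · exp(−((‖x‖/R − 1)/kε)²), the capillary stress tensor Ω(x) = σ ‖b(x)‖ (b(x) b(x)ᵀ / ‖b(x)‖² − I), and the pressure p(x) = p_atm + (d − 1)(σ/R) ∫_{‖x‖/R}^∞ (1/(√π · kε · s)) exp(−((s − 1)/kε)²) ds. Then for every x ≠ 0 the equilibrium momentum balance holds: ∇p(x) + (∇·Ω)(x) = 0, where (∇·Ω)ᵢ = Σⱼ ∂ⱼ Ωᵢⱼ. In particular, the constructed droplet state is an exact mechanical equilibrium of the surface-tension model. -/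
/-!
With `n = x / ‖x‖`, the stress is `Ω = F(‖x‖) (n nᵀ - I)` for the radial profile `F = σ ‖b‖`.
Since `(n nᵀ - I) n = 0`, the derivative of `F` drops out of the divergence, and what remains is
the capillary force `(∇·Ω)(x) = (d - 1) F(r) / r · n` of a sphere of radius `r = ‖x‖` and mean
curvature `(d - 1) / r`. The pressure is radial too, and by the fundamental theorem of calculus
for its tail integral its gradient is `-(d - 1) F(r) / r · n`.
-/

open MeasureTheory Set

theorem hasDerivAt_integral_Ioi {f : ℝ → ℝ} {a t : ℝ} (hat : a < t)
    (hf : IntegrableOn f (Ioi a)) (hft : ContinuousAt f t) :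
    HasDerivAt (fun u => ∫ s in Ioi u, f s) (-f t) t := by
  have hftc : HasDerivAt (fun u => ∫ s in a..u, f s) (f t) t :=
    intervalIntegral.integral_hasDerivAt_right
      ((intervalIntegrable_iff_integrableOn_Ioc_of_le hat.le).2 (hf.mono_set Ioc_subset_Ioi_self))
      (AEStronglyMeasurable.stronglyMeasurableAtFilter_of_mem hf.1 (Ioi_mem_nhds hat)) hft
  have htail : (fun u => ∫ s in Ioi u, f s) =ᶠ[nhds t]
      fun u => (∫ s in Ioi a, f s) - ∫ s in a..u, f s := by
    filter_upwards [Ioi_mem_nhds hat] with u hu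
    rw [← intervalIntegral.integral_Ioi_sub_Ioi hf (le_of_lt hu), sub_sub_cancel]
  exact (hftc.const_sub _).congr_of_eventuallyEq htail

theorem integrableOn_Ioi_one_div_mul_exp_neg_sq {t : ℝ} (ht : 0 < t) (c m k : ℝ) (hk : k ≠ 0) :
    IntegrableOn (fun s => 1 / (c * s) * Real.exp (-((s - m) / k) ^ 2)) (Ioi t) := by
  rcases eq_or_ne c 0 with rfl | hc
  · simp
  have hgauss : Integrable fun s => Real.exp (-((s - m) / k) ^ 2) := by
    have hb : 0 < (k ^ 2)⁻¹ := by positivity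
    convert (integrable_exp_neg_mul_sq hb).comp_sub_right m using 3 with s
    ring
  refine hgauss.integrableOn.bdd_mul (c := 1 / |c * t|) ?_ ?_
  · exact (by fun_prop : Measurable fun s : ℝ => 1 / (c * s)).aestronglyMeasurable
  · rw [ae_restrict_iff' measurableSet_Ioi]
    refine Filter.Eventually.of_forall fun s (hs : t < s) => ?_
    rw [Real.norm_eq_abs, abs_div, abs_one, abs_mul, abs_mul]
    gcongr

section Radial

variable {E : Type*} [NormedAddCommGroup E] [InnerProductSpace ℝ E]

theorem hasFDerivAt_norm {x : E} (hx : x ≠ 0) :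
    HasFDerivAt (fun y : E => ‖y‖) (‖x‖⁻¹ • innerSL ℝ x) x := by
  have hsqrt := (Real.hasDerivAt_sqrt (pow_ne_zero 2 (norm_ne_zero_iff.2 hx))).comp_hasFDerivAt x
    (hasStrictFDerivAt_norm_sq x).hasFDerivAt
  simp only [Function.comp_def, Real.sqrt_sq (norm_nonneg _)] at hsqrt
  refine hsqrt.congr_fderiv ?_
  ext v
  simp only [smul_apply, innerSL_apply_apply, smul_eq_mul, nsmul_eq_mul, Nat.cast_ofNat]
  field_simp

theorem fderiv_comp_norm_apply {F : ℝ → ℝ} {F' : ℝ} {x : E} (hx : x ≠ 0)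
    (hF : HasDerivAt F F' ‖x‖) (v : E) :
    fderiv ℝ (fun y => F ‖y‖) x v = F' * inner ℝ x v / ‖x‖ := by
  have h : HasFDerivAt (fun y => F ‖y‖) (F' • ‖x‖⁻¹ • innerSL ℝ x) x :=
    hF.comp_hasFDerivAt x (hasFDerivAt_norm hx)
  rw [h.fderiv]
  simp only [smul_apply, innerSL_apply_apply, smul_eq_mul]
  ring

theorem fderiv_integral_Ioi_norm_div_apply {f : ℝ → ℝ} {x : E} {a R : ℝ} (hx : x ≠ 0)
    (ha : a < ‖x‖ / R) (hf : IntegrableOn f (Ioi a)) (hft : ContinuousAt f (‖x‖ / R))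
    (p₀ C : ℝ) (v : E) :
    fderiv ℝ (fun y => p₀ + C * ∫ s in Ioi (‖y‖ / R), f s) x v =
      -(C * f (‖x‖ / R)) / R * inner ℝ x v / ‖x‖ := by
  have hP := (((hasDerivAt_integral_Ioi ha hf hft).comp ‖x‖
    ((hasDerivAt_id _).div_const R)).const_mul C).const_add p₀
  exact (fderiv_comp_norm_apply hx hP v).trans (by ring)

end Radial

section Coordinates

variable {ι : Type*} [Fintype ι]

theorem smul_apply_mul_smul_apply_div_norm_sq {c : ℝ} (hc : c ≠ 0)
    (y : EuclideanSpace ℝ ι) (k l : ι) :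
    (c • y) k * (c • y) l / ‖c • y‖ ^ 2 = y k * y l / ‖y‖ ^ 2 := by
  rw [PiLp.smul_apply, PiLp.smul_apply, smul_eq_mul, smul_eq_mul, norm_smul, mul_pow,
    Real.norm_eq_abs, sq_abs, mul_mul_mul_comm, ← sq, mul_div_mul_left _ _ (pow_ne_zero 2 hc)]

variable [DecidableEq ι]

theorem EuclideanSpace.sum_apply_mul_apply_single (L : EuclideanSpace ℝ ι →L[ℝ] ℝ)
    (x : EuclideanSpace ℝ ι) : ∑ j, x j * L (EuclideanSpace.single j 1) = L x := by
  conv_rhs => rw [← (EuclideanSpace.basisFun ι ℝ).sum_repr x]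
  simp [map_sum]

theorem sum_fderiv_mul_apply_mul_apply {φ : EuclideanSpace ℝ ι → ℝ} {x : EuclideanSpace ℝ ι}
    (hφ : DifferentiableAt ℝ φ x) (i : ι) :
    ∑ j, fderiv ℝ (fun y => φ y * (y i * y j)) x (EuclideanSpace.single j 1) =
      (fderiv ℝ φ x x + (Fintype.card ι + 1) * φ x) * x i := by
  have hcoord : ∀ k, HasFDerivAt (fun y : EuclideanSpace ℝ ι => y k)
      (EuclideanSpace.proj k : EuclideanSpace ℝ ι →L[ℝ] ℝ) x := fun k =>
    (EuclideanSpace.proj k : EuclideanSpace ℝ ι →L[ℝ] ℝ).hasFDerivAt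
  have hterm : ∀ j, fderiv ℝ (fun y => φ y * (y i * y j)) x (EuclideanSpace.single j 1) =
      x i * (x j * fderiv ℝ φ x (EuclideanSpace.single j 1)) + φ x * x i +
        (if i = j then φ x * x j else 0) := by
    intro j
    rw [(hφ.hasFDerivAt.fun_mul ((hcoord i).fun_mul (hcoord j))).fderiv]
    simp only [add_apply, smul_apply, PiLp.proj_apply, PiLp.single_apply, smul_eq_mul]
    split_ifs <;> ring
  simp only [hterm, Finset.sum_add_distrib, ← Finset.mul_sum,
    EuclideanSpace.sum_apply_mul_apply_single, Finset.sum_ite_eq, Finset.mem_univ, if_true,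
    Finset.sum_const, Finset.card_univ, nsmul_eq_mul]
  ring

theorem sum_fderiv_radial_stress {F : ℝ → ℝ} {x : EuclideanSpace ℝ ι} (hx : x ≠ 0)
    (hF : DifferentiableAt ℝ F ‖x‖) (i : ι) :
    ∑ j, fderiv ℝ (fun y : EuclideanSpace ℝ ι =>
        F ‖y‖ * (y i * y j / ‖y‖ ^ 2 - if i = j then 1 else 0)) x (EuclideanSpace.single j 1) =
      (Fintype.card ι - 1) * F ‖x‖ * x i / ‖x‖ ^ 2 := by
  have hr : ‖x‖ ≠ 0 := norm_ne_zero_iff.2 hx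
  have hFd : HasDerivAt F (deriv F ‖x‖) ‖x‖ := hF.hasDerivAt
  have hG := hFd.fun_div (hasDerivAt_pow 2 ‖x‖) (pow_ne_zero 2 hr)
  have hGnorm : DifferentiableAt ℝ (fun y : EuclideanSpace ℝ ι => F ‖y‖ / ‖y‖ ^ 2) x :=
    (hG.differentiableAt.comp x (hasFDerivAt_norm hx).differentiableAt :)
  have hFnorm : DifferentiableAt ℝ (fun y : EuclideanSpace ℝ ι => F ‖y‖) x :=
    hF.comp x (hasFDerivAt_norm hx).differentiableAt
  have hsplit : ∀ j, fderiv ℝ (fun y : EuclideanSpace ℝ ι =>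
        F ‖y‖ * (y i * y j / ‖y‖ ^ 2 - if i = j then 1 else 0)) x (EuclideanSpace.single j 1) =
      fderiv ℝ (fun y => F ‖y‖ / ‖y‖ ^ 2 * (y i * y j)) x (EuclideanSpace.single j 1) -
        (if i = j then 1 else 0) * fderiv ℝ (fun y => F ‖y‖) x (EuclideanSpace.single j 1) := by
    intro j
    have hcoord : ∀ k, DifferentiableAt ℝ (fun y : EuclideanSpace ℝ ι => y k) x := fun k =>
      (EuclideanSpace.proj k : EuclideanSpace ℝ ι →L[ℝ] ℝ).differentiableAt
    have hfun : (fun y : EuclideanSpace ℝ ι =>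
        F ‖y‖ * (y i * y j / ‖y‖ ^ 2 - if i = j then 1 else 0)) =
        fun y => F ‖y‖ / ‖y‖ ^ 2 * (y i * y j) - (if i = j then 1 else 0) * F ‖y‖ := by
      funext y; ring
    rw [hfun, fderiv_fun_sub (hGnorm.fun_mul ((hcoord i).fun_mul (hcoord j)))
      (hFnorm.const_mul _), fderiv_const_mul hFnorm]
    rfl
  rw [Finset.sum_congr rfl fun j _ => hsplit j, Finset.sum_sub_distrib,
    sum_fderiv_mul_apply_mul_apply hGnorm]
  simp only [boole_mul, Finset.sum_ite_eq, Finset.mem_univ, if_true]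
  rw [fderiv_comp_norm_apply hx hG, fderiv_comp_norm_apply hx hFd, real_inner_self_eq_norm_sq,
    EuclideanSpace.inner_single_right, conj_trivial]
  field_simp
  ring

end Coordinates

theorem droplet_equilibrium_momentum_balance_general (d : ℕ)
    (R kε σ p_atm : ℝ) (hR : 0 < R) (hkε : 0 < kε) :
    let b : EuclideanSpace ℝ (Fin d) → EuclideanSpace ℝ (Fin d) := fun x =>
      (-(1 / (Real.sqrt π * kε * R * ‖x‖)) *
        Real.exp (-(((‖x‖ / R - 1) / kε) ^ 2))) • x
    let Ω : EuclideanSpace ℝ (Fin d) → Matrix (Fin d) (Fin d) ℝ := fun x =>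
      Matrix.of fun i j =>
        σ * ‖b x‖ * (b x i * b x j / ‖b x‖ ^ 2 - if i = j then 1 else 0)
    let p : EuclideanSpace ℝ (Fin d) → ℝ := fun x =>
      p_atm + ((d : ℝ) - 1) * (σ / R) *
        ∫ s in Set.Ioi (‖x‖ / R),
          (1 / (Real.sqrt π * kε * s)) * Real.exp (-(((s - 1) / kε) ^ 2))
    ∀ x : EuclideanSpace ℝ (Fin d), x ≠ 0 → ∀ i : Fin d,
      fderiv ℝ p x (EuclideanSpace.single i 1) +
        (∑ j, fderiv ℝ (fun y => Ω y i j) x (EuclideanSpace.single j 1)) = 0 := by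
  intro b Ω p x hx i
  -- `π` is a variable of the statement, so `√π` may vanish; then `x / 0 = 0` makes `b` and `Ω`
  -- vanish and `p` constant.
  rcases (Real.sqrt_nonneg π).eq_or_lt with hπ | hπ
  · have hb : ∀ y, b y = 0 := fun y => by simp [b, ← hπ]
    have hΩ : ∀ j, (fun y => Ω y i j) = fun _ => 0 := fun j => funext fun y => by simp [Ω, hb]
    have hp : p = fun _ => p_atm := funext fun y => by simp [p, ← hπ]
    simp [hΩ, hp]
  have ht : 0 < ‖x‖ / R := div_pos (norm_pos_iff.2 hx) hR
  set A : ℝ → ℝ := fun r => Real.exp (-((r / R - 1) / kε) ^ 2) / (Real.sqrt π * kε * R)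
  set h : ℝ → ℝ := fun s => 1 / (Real.sqrt π * kε * s) * Real.exp (-((s - 1) / kε) ^ 2)
  have hΩ : ∀ j, (fun y => Ω y i j) =ᶠ[nhds x]
      fun y => σ * A ‖y‖ * (y i * y j / ‖y‖ ^ 2 - if i = j then 1 else 0) := by
    intro j
    filter_upwards [isOpen_compl_singleton.mem_nhds hx] with y (hy : y ≠ 0)
    have hy' := norm_pos_iff.2 hy
    have hc : -(1 / (Real.sqrt π * kε * R * ‖y‖)) * Real.exp (-(((‖y‖ / R - 1) / kε) ^ 2)) < 0 :=
      mul_neg_of_neg_of_pos (neg_neg_of_pos (by positivity)) (Real.exp_pos _)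
    simp only [Ω, b, Matrix.of_apply]
    rw [smul_apply_mul_smul_apply_div_norm_sq hc.ne, norm_smul, Real.norm_eq_abs, abs_of_neg hc]
    simp only [A]
    field_simp
  have hdiv : ∑ j, fderiv ℝ (fun y => Ω y i j) x (EuclideanSpace.single j 1) =
      ((d : ℝ) - 1) * (σ * A ‖x‖) * x i / ‖x‖ ^ 2 := by
    rw [Finset.sum_congr rfl fun j _ => by rw [(hΩ j).fderiv_eq]]
    simpa using sum_fderiv_radial_stress (F := fun r => σ * A r) hx (by fun_prop) i
  have hp : fderiv ℝ p x (EuclideanSpace.single i 1) =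
      -(((d : ℝ) - 1) * (σ / R) * h (‖x‖ / R)) / R *
        inner ℝ x (EuclideanSpace.single i 1) / ‖x‖ :=
    fderiv_integral_Ioi_norm_div_apply hx (half_lt_self ht)
      (integrableOn_Ioi_one_div_mul_exp_neg_sq (half_pos ht) _ 1 kε hkε.ne')
      (by fun_prop (disch := positivity)) _ _ _
  rw [hp, hdiv, EuclideanSpace.inner_single_right, conj_trivial]
  simp only [h, A]
  field_simp
  ring

/-- Exact mechanical equilibrium of the diffuse-interface droplet: with the
interface field `b(x) = −(x/(√π kε R ‖x‖)) exp(−((‖x‖/R − 1)/kε)²)`, the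
capillary stress tensor `Ω = σ‖b‖(b bᵀ/‖b‖² − I)` and the pressure
`p(x) = p_atm + (d−1)(σ/R) ∫_{‖x‖/R}^∞ exp(−((s−1)/kε)²)/(√π kε s) ds`,
the momentum balance `∇p(x) + (∇·Ω)(x) = 0` holds for every `x ≠ 0`. -/
theorem droplet_equilibrium_momentum_balance (d : ℕ) (hd : 1 ≤ d)
    (R kε σ p_atm : ℝ) (hR : 0 < R) (hkε : 0 < kε) (hσ : 0 < σ) :
    let b : EuclideanSpace ℝ (Fin d) → EuclideanSpace ℝ (Fin d) := fun x =>
      (-(1 / (Real.sqrt π * kε * R * ‖x‖)) *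
        Real.exp (-(((‖x‖ / R - 1) / kε) ^ 2))) • x
    let Ω : EuclideanSpace ℝ (Fin d) → Matrix (Fin d) (Fin d) ℝ := fun x =>
      Matrix.of fun i j =>
        σ * ‖b x‖ * (b x i * b x j / ‖b x‖ ^ 2 - if i = j then 1 else 0)
    let p : EuclideanSpace ℝ (Fin d) → ℝ := fun x =>
      p_atm + ((d : ℝ) - 1) * (σ / R) *
        ∫ s in Set.Ioi (‖x‖ / R),
          (1 / (Real.sqrt π * kε * s)) * Real.exp (-(((s - 1) / kε) ^ 2))
    ∀ x : EuclideanSpace ℝ (Fin d), x ≠ 0 → ∀ i : Fin d,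
      fderiv ℝ p x (EuclideanSpace.single i 1) +
        (∑ j, fderiv ℝ (fun y => Ω y i j) x (EuclideanSpace.single j 1)) = 0 :=
  droplet_equilibrium_momentum_balance_general d R kε σ p_atm hR hkε
end

section
/- Let ρ > 0, σ ≥ 0, a ∈ ℝ, and b = (b₁, b₂, b₃) ∈ ℝ³ with ‖b‖ > 0. Define β₁ = b₁/‖b‖, a_σ² = (σ/ρ) ‖b‖ (1 − β₁²), k₁ = (a² + a_σ²)/2, and k₃ = √(k₁² − (1 − β₁²) a² a_σ²). Then the radicand is always nonnegative, because of the identity k₁² − (1 − β₁²) a² a_σ² = ((a² − a_σ²)/2)² + β₁² a² a_σ²; moreover 0 ≤ k₃ ≤ k₁, hence 0 ≤ k₁ − k₃ ≤ k₁ + k₃ ≤ a² + a_σ². Consequently all characteristic speeds u, u ± √(k₁ + k₃), u ± √(k₁ − k₃) of the surface-tension model are real, and the fastest speeds satisfy |√(k₁ ± k₃)| ≤ √(a² + a_σ²). -/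
/-! Since `β₁² ≤ 1` and `a_σ² ≥ 0`, the term subtracted from `k₁²` in the radicand is
nonnegative, so `k₃ ≤ √(k₁²) = k₁`. Hence `k₁ ± k₃` lies in `[0, 2 k₁] = [0, a² + a_σ²]`, and
monotonicity of `√` bounds the speeds. -/

theorem PiLp.sq_apply_div_norm_le_one {ι : Type*} [Fintype ι] {p : ENNReal} [Fact (1 ≤ p)]
    (x : PiLp p (fun _ : ι => ℝ)) (i : ι) : (x i / ‖x‖) ^ 2 ≤ 1 := by
  rw [sq_le_one_iff_abs_le_one, abs_div, abs_norm]
  exact div_le_one_of_le₀ (PiLp.norm_apply_le x i) (norm_nonneg x)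

theorem half_add_sq_sub_mul_eq (A s c : ℝ) :
    ((A + s) / 2) ^ 2 - (1 - c) * A * s = ((A - s) / 2) ^ 2 + c * A * s := by
  ring

theorem Real.sqrt_sq_sub_le {k d : ℝ} (hk : 0 ≤ k) (hd : 0 ≤ d) : √(k ^ 2 - d) ≤ k :=
  (Real.sqrt_le_left hk).2 (by linarith)

theorem Real.abs_sqrt_le_sqrt {x y : ℝ} (h : x ≤ y) : |√x| ≤ √y := by
  rw [abs_of_nonneg (Real.sqrt_nonneg x)]
  exact Real.sqrt_le_sqrt h

theorem surface_tension_characteristic_speeds_real_general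
    (ρ σ a : ℝ) (hρ : 0 < ρ) (hσ : 0 ≤ σ)
    (b : EuclideanSpace ℝ (Fin 3)) :
    let β₁ : ℝ := b 0 / ‖b‖
    let aσsq : ℝ := (σ / ρ) * ‖b‖ * (1 - β₁ ^ 2)
    let k₁ : ℝ := (a ^ 2 + aσsq) / 2
    let k₃ : ℝ := Real.sqrt (k₁ ^ 2 - (1 - β₁ ^ 2) * a ^ 2 * aσsq)
    k₁ ^ 2 - (1 - β₁ ^ 2) * a ^ 2 * aσsq
        = ((a ^ 2 - aσsq) / 2) ^ 2 + β₁ ^ 2 * a ^ 2 * aσsq ∧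
    0 ≤ k₃ ∧ k₃ ≤ k₁ ∧
    0 ≤ k₁ - k₃ ∧ k₁ - k₃ ≤ k₁ + k₃ ∧ k₁ + k₃ ≤ a ^ 2 + aσsq ∧
    |Real.sqrt (k₁ + k₃)| ≤ Real.sqrt (a ^ 2 + aσsq) ∧
    |Real.sqrt (k₁ - k₃)| ≤ Real.sqrt (a ^ 2 + aσsq) := by
  intro β₁ aσsq k₁ k₃
  have hβ₁ : 0 ≤ 1 - β₁ ^ 2 := sub_nonneg.2 (PiLp.sq_apply_div_norm_le_one b 0)
  have haσsq : 0 ≤ aσsq := by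
    have : 0 ≤ σ / ρ := div_nonneg hσ hρ.le
    positivity
  have hk₁ : 0 ≤ k₁ := by positivity
  have hk₃ : 0 ≤ k₃ := Real.sqrt_nonneg _
  have hk₃_le : k₃ ≤ k₁ := Real.sqrt_sq_sub_le hk₁ (by positivity)
  have hsum : k₁ + k₃ ≤ a ^ 2 + aσsq :=
    calc k₁ + k₃ ≤ 2 * k₁ := by linarith
      _ = a ^ 2 + aσsq := mul_div_cancel₀ _ two_ne_zero
  exact ⟨half_add_sq_sub_mul_eq _ _ _, hk₃, hk₃_le, by linarith, by linarith, hsum,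
    Real.abs_sqrt_le_sqrt hsum, Real.abs_sqrt_le_sqrt (by linarith)⟩

/-- Reality and boundedness of the characteristic speeds of the
surface-tension model: with `β₁ = b₁/‖b‖`, `a_σ² = (σ/ρ)‖b‖(1−β₁²)`,
`k₁ = (a² + a_σ²)/2`, `k₃ = √(k₁² − (1−β₁²) a² a_σ²)`, the radicand is
nonnegative thanks to
`k₁² − (1−β₁²) a² a_σ² = ((a² − a_σ²)/2)² + β₁² a² a_σ²`, one has
`0 ≤ k₃ ≤ k₁` and `0 ≤ k₁ − k₃ ≤ k₁ + k₃ ≤ a² + a_σ²`; hence all the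
characteristic speeds `u`, `u ± √(k₁ ± k₃)` are real and
`√(k₁ ± k₃) ≤ √(a² + a_σ²)`. -/
theorem surface_tension_characteristic_speeds_real
    (ρ σ a : ℝ) (hρ : 0 < ρ) (hσ : 0 ≤ σ)
    (b : EuclideanSpace ℝ (Fin 3)) (hb : 0 < ‖b‖) :
    let β₁ : ℝ := b 0 / ‖b‖
    let aσsq : ℝ := (σ / ρ) * ‖b‖ * (1 - β₁ ^ 2)
    let k₁ : ℝ := (a ^ 2 + aσsq) / 2
    let k₃ : ℝ := Real.sqrt (k₁ ^ 2 - (1 - β₁ ^ 2) * a ^ 2 * aσsq)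
    k₁ ^ 2 - (1 - β₁ ^ 2) * a ^ 2 * aσsq
        = ((a ^ 2 - aσsq) / 2) ^ 2 + β₁ ^ 2 * a ^ 2 * aσsq ∧
    0 ≤ k₃ ∧ k₃ ≤ k₁ ∧
    0 ≤ k₁ - k₃ ∧ k₁ - k₃ ≤ k₁ + k₃ ∧ k₁ + k₃ ≤ a ^ 2 + aσsq ∧
    |Real.sqrt (k₁ + k₃)| ≤ Real.sqrt (a ^ 2 + aσsq) ∧
    |Real.sqrt (k₁ - k₃)| ≤ Real.sqrt (a ^ 2 + aσsq) :=
  surface_tension_characteristic_speeds_real_general ρ σ a hρ hσ b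
end
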